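/- arXiv:1311.4120 — 2 statements merged into one kernel-verified Lean document; each statement's English description precedes it below -/
import Mathlib

section
/- For any a > 0 and x ∈ ℝ², the convolution of the kernel 1/(2π|·|) with the Gaussian e^{-|·|²/a} satisfies ∫_{ℝ²} e^{-|y|²/a}/(2π|x−y|) dy = (√(πa)/2) e^{-r} I₀(r), where r = |x|²/(2a) and I₀ is the modified Bessel function of the first kind of order 0. -/
open MeasureTheory Real intervalIntegral

/-- The modified Bessel function of the first kind of order zero,
`I₀(r) = (1/π) ∫₀^π e^{r cos θ} dθ`. -/
noncomputable def besselI0 (r : ℝ) : ℝ :=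
  (1 / Real.pi) * ∫ θ in (0:ℝ)..Real.pi, Real.exp (r * Real.cos θ)

/-!
By rotation invariance we may take `x = R ≥ 0` real in `ℂ`, and after translating, the integral
is `∫ e^{-|R - w|²/a} / (2π|w|) dw`. Parametrising the plane by `w = ρ e^{iθ}` with `ρ ∈ ℝ` and
`θ ∈ (0, π)` (the Jacobian `|ρ|` cancels the Coulomb singularity) turns it into an integral over
all lines through the origin. Along each line the integrand is a shifted one-dimensional
Gaussian, whose integral is `√(πa) e^{-(R sin θ)²/a}`, the exponent being the squared distance
from `R` to the line; and `sin² θ = (1 - cos 2θ)/2` turns the remaining angular integral into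
`π e^{-r} I₀(r)`.
-/

open Set

section IsometryInvariance

variable {E F G : Type*} [NormedAddCommGroup E] [InnerProductSpace ℝ E] [FiniteDimensional ℝ E]
  [MeasurableSpace E] [BorelSpace E] [NormedAddCommGroup F] [InnerProductSpace ℝ F]
  [FiniteDimensional ℝ F] [MeasurableSpace F] [BorelSpace F]
  [NormedAddCommGroup G] [NormedSpace ℝ G]

theorem LinearIsometryEquiv.integral_norm_norm_sub (L : E ≃ₗᵢ[ℝ] F) (g : ℝ → ℝ → G) (x : F) :
    ∫ y, g ‖y‖ ‖x - y‖ = ∫ w, g ‖w‖ ‖L.symm x - w‖ := by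
  rw [← L.measurePreserving.integral_comp L.toMeasurableEquiv.measurableEmbedding]
  congr 1 with w
  rw [L.norm_map, ← L.norm_map (L.symm x - w), map_sub, L.apply_symm_apply]

theorem EuclideanSpace.integral_norm_norm_sub_eq_complex (g : ℝ → ℝ → G)
    (x : EuclideanSpace ℝ (Fin 2)) :
    ∫ y, g ‖y‖ ‖x - y‖ = ∫ w : ℂ, g ‖w‖ ‖(‖x‖ : ℂ) - w‖ := by
  set c := Complex.orthonormalBasisOneI.repr.symm x
  set L := rotation (Circle.exp (Complex.arg c))
  have hc : L ‖c‖ = c := by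
    rw [rotation_apply, Circle.coe_exp, mul_comm]
    exact Complex.norm_mul_exp_arg_mul_I c
  have hnorm : ‖c‖ = ‖x‖ := LinearIsometryEquiv.norm_map _ x
  rw [Complex.orthonormalBasisOneI.repr.integral_norm_norm_sub, L.integral_norm_norm_sub]
  change ∫ w, g ‖w‖ ‖L.symm c - w‖ = _
  rw [← hc, L.symm_apply_apply, hnorm]

end IsometryInvariance

section LinesThroughOrigin

@[fun_prop]
theorem Complex.continuous_polarCoord_symm : Continuous Complex.polarCoord.symm := by
  simp only [funext Complex.polarCoord_symm_apply]
  fun_prop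

variable {E : Type*} [NormedAddCommGroup E] [NormedSpace ℝ E]

theorem Complex.polarCoord_symm_sub_pi (ρ θ : ℝ) :
    Complex.polarCoord.symm (ρ, θ - π) = Complex.polarCoord.symm (-ρ, θ) := by
  simp only [Complex.polarCoord_symm_apply, Real.cos_sub_pi, Real.sin_sub_pi, Complex.ofReal_neg]
  ring

theorem integral_Ioi_comp_neg_add {G : ℝ → E} (hG : Integrable G) :
    ∫ ρ in Ioi 0, (G (-ρ) + G ρ) = ∫ ρ, G ρ := by
  rw [integral_add hG.comp_neg.integrableOn hG.integrableOn, integral_comp_neg_Ioi, neg_zero,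
    integral_Iic_add_Ioi hG.integrableOn hG.integrableOn]

theorem integral_Ioo_neg_pi_pi_polarCoord_symm {f : ℂ → E} (hf : Continuous f) (ρ : ℝ) :
    ∫ θ in Ioo (-π) π, f (Complex.polarCoord.symm (ρ, θ)) =
      (∫ θ in 0..π, f (Complex.polarCoord.symm (-ρ, θ))) +
        ∫ θ in 0..π, f (Complex.polarCoord.symm (ρ, θ)) := by
  have hcont : Continuous fun θ => f (Complex.polarCoord.symm (ρ, θ)) := by fun_prop
  rw [← integral_Ioc_eq_integral_Ioo, ← intervalIntegral.integral_of_le (by linarith [pi_pos]),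
    ← intervalIntegral.integral_add_adjacent_intervals (b := 0) (hcont.intervalIntegrable _ _)
      (hcont.intervalIntegrable _ _)]
  have hshift := intervalIntegral.integral_comp_sub_right
    (fun θ => f (Complex.polarCoord.symm (ρ, θ))) π (a := 0) (b := π)
  simp only [Complex.polarCoord_symm_sub_pi, zero_sub, sub_self] at hshift
  rw [hshift]

theorem Complex.integral_inv_norm_smul_eq_integral_lines {f : ℂ → E} (hf : Continuous f)
    (hF : IntegrableOn (fun p => f (Complex.polarCoord.symm p)) (univ ×ˢ Ioc (-π) π)) :
    ∫ w, ‖w‖⁻¹ • f w = ∫ θ in 0..π, ∫ ρ, f (Complex.polarCoord.symm (ρ, θ)) := by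
  set F : ℝ × ℝ → E := fun p => f (Complex.polarCoord.symm p)
  have hpolar : ∫ w, ‖w‖⁻¹ • f w = ∫ p in Ioi 0 ×ˢ Ioo (-π) π, F p := by
    rw [← Complex.integral_comp_polarCoord_symm, polarCoord_target]
    refine setIntegral_congr_fun (measurableSet_Ioi.prod measurableSet_Ioo) fun p hp => ?_
    have hρ : 0 < p.1 := hp.1
    rw [Complex.norm_polarCoord_symm, abs_of_pos hρ, smul_smul, mul_inv_cancel₀ hρ.ne', one_smul]
  have hline : Integrable F (volume.prod (volume.restrict (Ioc 0 π))) := by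
    have h := hF.mono_set (prod_mono subset_rfl
      (Ioc_subset_Ioc_left (neg_nonpos.mpr pi_pos.le) : Ioc 0 π ⊆ Ioc (-π) π))
    rwa [IntegrableOn, Measure.volume_eq_prod, ← Measure.prod_restrict,
      Measure.restrict_univ] at h
  have hG : Integrable fun ρ => ∫ θ in 0..π, F (ρ, θ) := by
    simpa only [intervalIntegral.integral_of_le pi_pos.le] using hline.integral_prod_left
  calc ∫ w, ‖w‖⁻¹ • f w = ∫ p in Ioi 0 ×ˢ Ioo (-π) π, F p := hpolar
    _ = ∫ ρ in Ioi 0, ∫ θ in Ioo (-π) π, F (ρ, θ) :=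
      setIntegral_prod _ (hF.mono_set (prod_mono (subset_univ _) Ioo_subset_Ioc_self))
    _ = ∫ ρ in Ioi 0, ((∫ θ in 0..π, F (-ρ, θ)) + ∫ θ in 0..π, F (ρ, θ)) := by
      simp only [F, integral_Ioo_neg_pi_pi_polarCoord_symm hf]
    _ = ∫ ρ, ∫ θ in 0..π, F (ρ, θ) := integral_Ioi_comp_neg_add hG
    _ = ∫ θ in 0..π, ∫ ρ, F (ρ, θ) := by
      simp only [intervalIntegral.integral_of_le pi_pos.le]
      exact integral_integral_swap hline

end LinesThroughOrigin

theorem integral_exp_mul_cos_two_mul (r : ℝ) :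
    ∫ θ in 0..π, rexp (r * cos (2 * θ)) = π * besselI0 r := by
  have hcont : Continuous fun u => rexp (r * cos u) := by fun_prop
  have hreflect : ∫ u in π..2 * π, rexp (r * cos u) = ∫ u in 0..π, rexp (r * cos u) := by
    have h := intervalIntegral.integral_comp_sub_left (fun u => rexp (r * cos u)) (2 * π)
      (a := 0) (b := π)
    rw [show 2 * π - π = π by ring, sub_zero] at h
    simp only [Real.cos_two_pi_sub] at h
    exact h.symm
  rw [intervalIntegral.integral_comp_mul_left (fun u => rexp (r * cos u)) two_ne_zero, mul_zero,
    ← intervalIntegral.integral_add_adjacent_intervals (b := π) (hcont.intervalIntegrable _ _)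
      (hcont.intervalIntegrable _ _), hreflect, besselI0]
  field_simp
  ring

theorem integral_exp_neg_two_mul_sin_sq (r : ℝ) :
    ∫ θ in 0..π, rexp (-(2 * r * sin θ ^ 2)) = π * rexp (-r) * besselI0 r := by
  have hsplit : ∀ θ, rexp (-(2 * r * sin θ ^ 2)) = rexp (-r) * rexp (r * cos (2 * θ)) := by
    intro θ
    rw [← Real.exp_add, Real.cos_two_mul]
    congr 1
    linear_combination (-2 * r) * Real.cos_sq_add_sin_sq θ
  simp only [hsplit, intervalIntegral.integral_const_mul, integral_exp_mul_cos_two_mul]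
  ring

theorem integral_exp_neg_sq_sub_div (a c : ℝ) :
    ∫ ρ, rexp (-(ρ - c) ^ 2 / a) = √(π * a) := by
  have h := integral_sub_right_eq_self (μ := volume) (fun ρ : ℝ => rexp (-a⁻¹ * ρ ^ 2)) c
  simp only [integral_gaussian, div_inv_eq_mul] at h
  rw [← h]
  congr with ρ
  ring_nf

theorem exp_neg_norm_sub_sq_div_le {V : Type*} [SeminormedAddCommGroup V] {a : ℝ} (ha : 0 < a)
    (c w : V) : rexp (-‖c - w‖ ^ 2 / a) ≤ rexp (‖c‖ ^ 2 / a) * rexp (-‖w‖ ^ 2 / (2 * a)) := by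
  have htri : ‖w‖ ≤ ‖c‖ + ‖c - w‖ := by simpa using norm_sub_le c (c - w)
  have hsq : ‖w‖ ^ 2 ≤ 2 * ‖c‖ ^ 2 + 2 * ‖c - w‖ ^ 2 := by
    nlinarith [norm_nonneg w, sq_nonneg (‖c‖ - ‖c - w‖)]
  have hgap : ‖c‖ ^ 2 / a + -‖w‖ ^ 2 / (2 * a) - -‖c - w‖ ^ 2 / a =
      (2 * ‖c‖ ^ 2 + 2 * ‖c - w‖ ^ 2 - ‖w‖ ^ 2) / (2 * a) := by
    field_simp
    ring
  rw [← Real.exp_add, Real.exp_le_exp, ← sub_nonneg, hgap]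
  exact div_nonneg (by linarith) (by positivity)

theorem Complex.norm_ofReal_sub_polarCoord_symm_sq (R ρ θ : ℝ) :
    ‖(R : ℂ) - Complex.polarCoord.symm (ρ, θ)‖ ^ 2 =
      (ρ - R * Real.cos θ) ^ 2 + (R * Real.sin θ) ^ 2 := by
  rw [Complex.sq_norm, Complex.normSq_apply, Complex.polarCoord_symm_apply]
  simp only [Complex.sub_re, Complex.sub_im, Complex.mul_re, Complex.mul_im, Complex.add_re,
    Complex.add_im, Complex.ofReal_re, Complex.ofReal_im, Complex.I_re, Complex.I_im]
  linear_combination (ρ ^ 2 - R ^ 2) * Real.cos_sq_add_sin_sq θ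

theorem integral_exp_neg_norm_ofReal_sub_polarCoord_symm_sq (a R θ : ℝ) :
    ∫ ρ, rexp (-‖(R : ℂ) - Complex.polarCoord.symm (ρ, θ)‖ ^ 2 / a) =
      √(π * a) * rexp (-(R * sin θ) ^ 2 / a) := by
  simp only [Complex.norm_ofReal_sub_polarCoord_symm_sq, neg_add, add_div, Real.exp_add,
    MeasureTheory.integral_mul_const, integral_exp_neg_sq_sub_div]

theorem integrableOn_exp_neg_norm_sub_polarCoord_symm_sq {a : ℝ} (ha : 0 < a) (c : ℂ)
    {t : Set ℝ} (ht : volume t ≠ ⊤) :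
    IntegrableOn (fun p => rexp (-‖c - Complex.polarCoord.symm p‖ ^ 2 / a)) (univ ×ˢ t) := by
  have hbound : Integrable (fun p : ℝ × ℝ => rexp (‖c‖ ^ 2 / a) * rexp (-(2 * a)⁻¹ * p.1 ^ 2) * 1)
      ((volume.restrict univ).prod (volume.restrict t)) :=
    Integrable.mul_prod (f := fun ρ => rexp (‖c‖ ^ 2 / a) * rexp (-(2 * a)⁻¹ * ρ ^ 2))
      ((integrable_exp_neg_mul_sq (by positivity)).const_mul _).restrict (integrableOn_const ht)
  rw [IntegrableOn, Measure.volume_eq_prod, ← Measure.prod_restrict]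
  refine hbound.mono (Continuous.aestronglyMeasurable (by fun_prop)) (ae_of_all _ fun p => ?_)
  have hnorm : -‖Complex.polarCoord.symm p‖ ^ 2 / (2 * a) = -(2 * a)⁻¹ * p.1 ^ 2 := by
    rw [Complex.norm_polarCoord_symm, sq_abs]
    ring
  rw [Real.norm_of_nonneg (by positivity), Real.norm_of_nonneg (by positivity), mul_one, ← hnorm]
  exact exp_neg_norm_sub_sq_div_le ha c _

/-- The convolution of `1/(2π|·|)` with the Gaussian `e^{-|·|²/a}` in 2D equals
`(√(πa)/2) e^{-r} I₀(r)` with `r = |x|²/(2a)`. -/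
theorem coulomb2d_gaussian_convolution (a : ℝ) (ha : 0 < a) (x : EuclideanSpace ℝ (Fin 2)) :
    (∫ y : EuclideanSpace ℝ (Fin 2),
        Real.exp (-‖y‖ ^ 2 / a) / (2 * Real.pi * ‖x - y‖))
      = (Real.sqrt (Real.pi * a) / 2) * Real.exp (-(‖x‖ ^ 2 / (2 * a)))
          * besselI0 (‖x‖ ^ 2 / (2 * a)) := by
  set R := ‖x‖
  have hlines : ∫ w : ℂ, ‖w‖⁻¹ • rexp (-‖(R : ℂ) - w‖ ^ 2 / a) =
      ∫ θ in 0..π, √(π * a) * rexp (-(2 * (R ^ 2 / (2 * a)) * sin θ ^ 2)) := by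
    rw [Complex.integral_inv_norm_smul_eq_integral_lines (by fun_prop)
      (integrableOn_exp_neg_norm_sub_polarCoord_symm_sq ha _ (by simp [Real.volume_Ioc]))]
    congr with θ
    rw [integral_exp_neg_norm_ofReal_sub_polarCoord_symm_sq]
    field_simp
  calc (∫ y, rexp (-‖y‖ ^ 2 / a) / (2 * π * ‖x - y‖))
      = ∫ w : ℂ, rexp (-‖w‖ ^ 2 / a) / (2 * π * ‖(R : ℂ) - w‖) :=
        EuclideanSpace.integral_norm_norm_sub_eq_complex
          (fun s t => rexp (-s ^ 2 / a) / (2 * π * t)) x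
    _ = ∫ w : ℂ, rexp (-‖(R : ℂ) - w‖ ^ 2 / a) / (2 * π * ‖w‖) := by
        rw [← integral_sub_left_eq_self _ volume (R : ℂ)]
        simp only [sub_sub_cancel]
    _ = (2 * π)⁻¹ * ∫ w : ℂ, ‖w‖⁻¹ • rexp (-‖(R : ℂ) - w‖ ^ 2 / a) := by
        rw [← MeasureTheory.integral_const_mul]
        congr with w
        rw [smul_eq_mul, mul_inv, div_eq_mul_inv, mul_inv]
        ring
    _ = _ := by
        rw [hlines, intervalIntegral.integral_const_mul, integral_exp_neg_two_mul_sin_sq]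
        field_simp
end

section
/- For any a > 0, the function φ: ℝ^d → ℝ defined by φ(k) = (1 − e^{−‖k‖²/a})/‖k‖² for k ≠ 0 and φ(0) = 1/a is smooth (C^∞) on all of ℝ^d. -/
open Real

/-- The function `φ(k) = (1 − e^{−‖k‖²/a})/‖k‖²` for `k ≠ 0`, `φ(0) = 1/a`,
is `C^∞` on all of `ℝ^d`. -/
theorem smooth_removable_singularity (d : ℕ) (a : ℝ) (ha : 0 < a)
    (φ : EuclideanSpace ℝ (Fin d) → ℝ)
    (hφ : ∀ k : EuclideanSpace ℝ (Fin d), k ≠ 0 →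
      φ k = (1 - Real.exp (-‖k‖ ^ 2 / a)) / ‖k‖ ^ 2)
    (hφ0 : φ 0 = 1 / a) :
    ContDiff ℝ (⊤ : ℕ∞) φ := by
  set f : ℝ → ℝ := fun t => 1 - Real.exp (-t / a) with hf
  have hf0 : f 0 = 0 := by simp [hf]
  have hfa : AnalyticAt ℝ f 0 := by
    apply analyticAt_const.sub
    exact analyticAt_rexp.comp ((analyticAt_id.neg).div analyticAt_const (ha.ne'))
  have hderiv : HasDerivAt f (1 / a) 0 := by
    have h1 : HasDerivAt (fun t : ℝ => -t / a) (-1 / a) 0 := by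
      simpa using ((hasDerivAt_id (0:ℝ)).neg.div_const a)
    have h2 : HasDerivAt (fun t : ℝ => Real.exp (-t / a)) (Real.exp (-0/a) * (-1/a)) 0 :=
      (Real.hasDerivAt_exp _).comp 0 h1
    have := (hasDerivAt_const (0:ℝ) (1:ℝ)).sub h2
    simpa [hf, Pi.sub_def] using this.congr_deriv (by field_simp; simp)
  set h : ℝ → ℝ := dslope f 0 with hh
  have hh0 : h 0 = 1 / a := by
    rw [hh, dslope_same]
    exact hderiv.deriv
  have hhne : ∀ t : ℝ, t ≠ 0 → h t = f t / t := by
    intro t ht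
    rw [hh, dslope_of_ne f ht, slope_def_field]
    simp [hf0, div_eq_mul_inv, mul_comm]
  -- h is smooth on ℝ
  have hsmooth : ContDiff ℝ (⊤ : ℕ∞) h := by
    rw [contDiff_iff_contDiffAt]
    intro x
    rcases eq_or_ne x 0 with rfl | hx
    · obtain ⟨p, hp⟩ := hfa
      exact hp.has_fpower_series_dslope_fslope.analyticAt.contDiffAt
    · have hev : (fun t => f t / t) =ᶠ[nhds x] h := by
        filter_upwards [isOpen_ne.mem_nhds hx] with t ht
        exact (hhne t ht).symm
      have : ContDiffAt ℝ (⊤ : ℕ∞) (fun t => f t / t) x := by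
        apply ContDiffAt.div
        · exact (contDiff_const.sub
            ((Real.contDiff_exp).comp ((contDiff_id.neg).div_const a))).contDiffAt
        · exact contDiffAt_id
        · exact hx
      exact this.congr_of_eventuallyEq hev.symm
  have hnsq : ContDiff ℝ (⊤ : ℕ∞) (fun k : EuclideanSpace ℝ (Fin d) => ‖k‖ ^ 2) :=
    contDiff_norm_sq ℝ
  have : φ = h ∘ (fun k : EuclideanSpace ℝ (Fin d) => ‖k‖ ^ 2) := by
    funext k
    rcases eq_or_ne k 0 with rfl | hk
    · simp [hφ0, hh0]
    · have hns : ‖k‖ ^ 2 ≠ 0 := pow_ne_zero _ (norm_ne_zero_iff.mpr hk)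
      simp only [Function.comp_apply, hhne _ hns, hφ k hk, hf]
  rw [this]
  exact hsmooth.comp hnsq
end
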